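/- arXiv:2405.16565 — 8 statements merged into one kernel-verified Lean document; each statement's English description precedes it below -/
import Mathlib

section
/- Any partially ordered group endowed with Frink's interval topology is a quasi-topological group with a base of convex open sets: for every open set V and every a ∈ G, the sets aV, Va and V⁻¹ are open, and G admits a base of convex open sets. -/
/-- Frink's interval topology on a poset. -/
def frinkTopology (P : Type*) [Preorder P] : TopologicalSpace P :=
  TopologicalSpace.generateFrom
    ({s | ∃ a : P, s = {x | ¬ a ≤ x}} ∪ {s | ∃ b : P, s = {x | ¬ x ≤ b}})

/-- A partially ordered group endowed with Frink's interval topology is a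
quasi-topological group (translations and inversion preserve open sets) admitting
a base of order-convex open sets. -/
theorem stmt_1 {G : Type*} [Group G] [PartialOrder G]
    (hleft : ∀ a y z : G, y ≤ z → a * y ≤ a * z)
    (hright : ∀ a y z : G, y ≤ z → y * a ≤ z * a) :
    (∀ V : Set G, @IsOpen G (frinkTopology G) V → ∀ a : G,
        @IsOpen G (frinkTopology G) ((fun x => a * x) '' V) ∧
        @IsOpen G (frinkTopology G) ((fun x => x * a) '' V) ∧
        @IsOpen G (frinkTopology G) V⁻¹) ∧
      ∃ B : Set (Set G),
        (∀ S ∈ B, @IsOpen G (frinkTopology G) S ∧ S.OrdConnected) ∧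
        (∀ U : Set G, @IsOpen G (frinkTopology G) U → ∀ x ∈ U, ∃ S ∈ B, x ∈ S ∧ S ⊆ U) := by
  letI t : TopologicalSpace G := frinkTopology G
  set 𝒮 : Set (Set G) :=
    ({s | ∃ a : G, s = {x | ¬ a ≤ x}} ∪ {s | ∃ b : G, s = {x | ¬ x ≤ b}}) with h𝒮
  have hgen : t = TopologicalSpace.generateFrom 𝒮 := rfl
  have hsubopen : ∀ s ∈ 𝒮, IsOpen s := fun s hs => TopologicalSpace.GenerateOpen.basic s hs
  -- order-reversal by inversion
  have hinv : ∀ x y : G, x ≤ y → y⁻¹ ≤ x⁻¹ := by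
    intro x y h
    have h1 : y⁻¹ * x ≤ y⁻¹ * y := hleft y⁻¹ _ _ h
    have h2 : y⁻¹ * x * x⁻¹ ≤ y⁻¹ * y * x⁻¹ := hright x⁻¹ _ _ h1
    simpa [mul_assoc] using h2
  -- preimage of open is open provided preimages of subbasic sets are open
  have key : ∀ f : G → G, (∀ s ∈ 𝒮, IsOpen (f ⁻¹' s)) →
      ∀ U : Set G, IsOpen U → IsOpen (f ⁻¹' U) := by
    intro f hf U hU
    have hU' : TopologicalSpace.GenerateOpen 𝒮 U := hU
    clear hU
    induction hU' with
    | basic s hs => exact hf s hs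
    | univ => simpa using (isOpen_univ : IsOpen (Set.univ : Set G))
    | inter s u _ _ ih1 ih2 => rw [Set.preimage_inter]; exact ih1.inter ih2
    | sUnion S _ ih => rw [Set.preimage_sUnion]; exact isOpen_biUnion ih
  constructor
  · intro V hV a
    refine ⟨?_, ?_, ?_⟩
    · -- left translation
      have himg : (fun x => a * x) '' V = (fun x => a⁻¹ * x) ⁻¹' V := by
        ext x
        constructor
        · rintro ⟨v, hv, rfl⟩; simpa using hv
        · intro hx; exact ⟨a⁻¹ * x, hx, by simp⟩
      rw [himg]
      refine key _ ?_ V hV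
      rintro s (⟨b, rfl⟩ | ⟨b, rfl⟩)
      · have : (fun x => a⁻¹ * x) ⁻¹' {x | ¬ b ≤ x} = {x | ¬ a * b ≤ x} := by
          ext x
          simp only [Set.mem_preimage, Set.mem_setOf_eq]
          constructor
          · intro h hc; exact h (by simpa [mul_assoc] using hleft a⁻¹ _ _ hc)
          · intro h hc; exact h (by simpa [mul_assoc] using hleft a _ _ hc)
        rw [this]; exact hsubopen _ (Or.inl ⟨a * b, rfl⟩)
      · have : (fun x => a⁻¹ * x) ⁻¹' {x | ¬ x ≤ b} = {x | ¬ x ≤ a * b} := by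
          ext x
          simp only [Set.mem_preimage, Set.mem_setOf_eq]
          constructor
          · intro h hc; exact h (by simpa [mul_assoc] using hleft a⁻¹ _ _ hc)
          · intro h hc; exact h (by simpa [mul_assoc] using hleft a _ _ hc)
        rw [this]; exact hsubopen _ (Or.inr ⟨a * b, rfl⟩)
    · -- right translation
      have himg : (fun x => x * a) '' V = (fun x => x * a⁻¹) ⁻¹' V := by
        ext x
        constructor
        · rintro ⟨v, hv, rfl⟩; simpa using hv
        · intro hx; exact ⟨x * a⁻¹, hx, by simp⟩
      rw [himg]
      refine key _ ?_ V hV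
      rintro s (⟨b, rfl⟩ | ⟨b, rfl⟩)
      · have : (fun x => x * a⁻¹) ⁻¹' {x | ¬ b ≤ x} = {x | ¬ b * a ≤ x} := by
          ext x
          simp only [Set.mem_preimage, Set.mem_setOf_eq]
          constructor
          · intro h hc; exact h (by simpa [mul_assoc] using hright a⁻¹ _ _ hc)
          · intro h hc; exact h (by simpa [mul_assoc] using hright a _ _ hc)
        rw [this]; exact hsubopen _ (Or.inl ⟨b * a, rfl⟩)
      · have : (fun x => x * a⁻¹) ⁻¹' {x | ¬ x ≤ b} = {x | ¬ x ≤ b * a} := by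
          ext x
          simp only [Set.mem_preimage, Set.mem_setOf_eq]
          constructor
          · intro h hc; exact h (by simpa [mul_assoc] using hright a⁻¹ _ _ hc)
          · intro h hc; exact h (by simpa [mul_assoc] using hright a _ _ hc)
        rw [this]; exact hsubopen _ (Or.inr ⟨b * a, rfl⟩)
    · -- inversion
      have himg : V⁻¹ = (fun x : G => x⁻¹) ⁻¹' V := rfl
      rw [himg]
      refine key _ ?_ V hV
      rintro s (⟨b, rfl⟩ | ⟨b, rfl⟩)
      · have : (fun x : G => x⁻¹) ⁻¹' {x | ¬ b ≤ x} = {x | ¬ x ≤ b⁻¹} := by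
          ext x
          simp only [Set.mem_preimage, Set.mem_setOf_eq]
          constructor
          · intro h hc; exact h (by simpa using hinv _ _ hc)
          · intro h hc; exact h (by simpa using hinv _ _ hc)
        rw [this]; exact hsubopen _ (Or.inr ⟨b⁻¹, rfl⟩)
      · have : (fun x : G => x⁻¹) ⁻¹' {x | ¬ x ≤ b} = {x | ¬ b⁻¹ ≤ x} := by
          ext x
          simp only [Set.mem_preimage, Set.mem_setOf_eq]
          constructor
          · intro h hc; exact h (by simpa using hinv _ _ hc)
          · intro h hc; exact h (by simpa using hinv _ _ hc)
        rw [this]; exact hsubopen _ (Or.inl ⟨b⁻¹, rfl⟩)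
  · -- base of convex open sets
    have hbasis := TopologicalSpace.isTopologicalBasis_of_subbasis (t := t) hgen
    refine ⟨(fun f => ⋂₀ f) '' {f : Set (Set G) | f.Finite ∧ f ⊆ 𝒮}, ?_, ?_⟩
    · rintro S ⟨f, ⟨hfin, hsub⟩, rfl⟩
      refine ⟨hbasis.isOpen ⟨f, ⟨hfin, hsub⟩, rfl⟩, ?_⟩
      apply Set.ordConnected_sInter
      intro s hs
      rcases hsub hs with ⟨b, rfl⟩ | ⟨b, rfl⟩
      · exact ⟨fun x hx z hz y hy hc => hz (hc.trans hy.2)⟩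
      · exact ⟨fun x hx z hz y hy hc => hx (hy.1.trans hc)⟩
    · intro U hU x hx
      exact hbasis.exists_subset_of_mem_open hx hU
end

section
/- Any totally ordered group endowed with the order topology is a topological group: multiplication is jointly continuous and inversion is continuous. -/
/-!
Translations are order isomorphisms and inversion is an order anti-isomorphism, so all of them
are homeomorphisms of the order topology, and it suffices to check that multiplication is
continuous at `(1, 1)`. Given `1 < c`, either some `d` lies strictly between `1` and `c`, and then
`x < d`, `y < d⁻¹ * c` give `x * y < c`, or `c` covers `1`, and then `x, y < c` forces
`x, y ≤ 1`. Lower bounds `c < x * y` with `c < 1` follow by inverting: `(x * y)⁻¹ = y⁻¹ * x⁻¹`.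
-/

open Filter Topology Set

section OrderTopology

variable {G : Type*} [Group G] [LinearOrder G] [TopologicalSpace G] [OrderTopology G]

theorem nhds_eq_map_mul_left_nhds_one [MulLeftMono G] (a : G) :
    𝓝 a = map (a * ·) (𝓝 1) := by
  convert ((OrderIso.mulLeft a).toHomeomorph.map_nhds_eq 1).symm using 2
  exacts [(mul_one a).symm, rfl]

theorem nhds_eq_map_mul_right_nhds_one [MulRightMono G] (a : G) :
    𝓝 a = map (· * a) (𝓝 1) := by
  convert ((OrderIso.mulRight a).toHomeomorph.map_nhds_eq 1).symm using 2
  exacts [(one_mul a).symm, rfl]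

variable [MulLeftMono G] [MulRightMono G]

theorem continuous_inv_of_orderTopology : Continuous (fun x : G => x⁻¹) :=
  continuous_ofDual.comp (OrderIso.inv G).toHomeomorph.continuous

theorem eventually_mul_lt_of_one_lt {c : G} (hc : 1 < c) :
    ∀ᶠ p : G × G in 𝓝 1 ×ˢ 𝓝 1, p.1 * p.2 < c := by
  rcases dense_or_discrete 1 c with ⟨d, hd, hdc⟩ | ⟨-, hc_cover⟩
  · have hd' : 1 < d⁻¹ * c := by rwa [← lt_inv_mul_iff_lt] at hdc
    filter_upwards [prod_mem_prod (Iio_mem_nhds hd) (Iio_mem_nhds hd')] with p ⟨hx, hy⟩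
    calc p.1 * p.2 < d * (d⁻¹ * c) := mul_lt_mul_of_lt_of_lt hx hy
      _ = c := mul_inv_cancel_left d c
  · filter_upwards [prod_mem_prod (Iio_mem_nhds hc) (Iio_mem_nhds hc)] with p ⟨hx, hy⟩
    exact (mul_le_one' (hc_cover _ hx) (hc_cover _ hy)).trans_lt hc

theorem eventually_lt_mul_of_lt_one {c : G} (hc : c < 1) :
    ∀ᶠ p : G × G in 𝓝 1 ×ˢ 𝓝 1, c < p.1 * p.2 := by
  have hinv : Tendsto (fun x : G => x⁻¹) (𝓝 1) (𝓝 1) :=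
    continuous_inv_of_orderTopology.tendsto' 1 1 inv_one
  have hswap : Tendsto (fun p : G × G => (p.2⁻¹, p.1⁻¹)) (𝓝 1 ×ˢ 𝓝 1) (𝓝 1 ×ˢ 𝓝 1) :=
    (hinv.comp tendsto_snd).prodMk (hinv.comp tendsto_fst)
  filter_upwards [hswap.eventually (eventually_mul_lt_of_one_lt (one_lt_inv'.mpr hc))]
    with p hp
  rwa [← mul_inv_rev, inv_lt_inv_iff] at hp

theorem tendsto_mul_nhds_one_of_orderTopology :
    Tendsto (Function.uncurry ((· * ·) : G → G → G)) (𝓝 1 ×ˢ 𝓝 1) (𝓝 1) :=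
  tendsto_order.2 ⟨fun _ => eventually_lt_mul_of_lt_one, fun _ => eventually_mul_lt_of_one_lt⟩

end OrderTopology

/-- Any totally ordered group endowed with the order topology is a topological
group: multiplication is jointly continuous and inversion is continuous. -/
theorem stmt_3 {G : Type*} [Group G] [LinearOrder G]
    [CovariantClass G G (· * ·) (· ≤ ·)]
    [CovariantClass G G (Function.swap (· * ·)) (· ≤ ·)]
    [TopologicalSpace G] [OrderTopology G] :
    IsTopologicalGroup G :=
  IsTopologicalGroup.of_nhds_one' tendsto_mul_nhds_one_of_orderTopology
    (continuous_inv_of_orderTopology.tendsto' 1 1 inv_one)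
    nhds_eq_map_mul_left_nhds_one nhds_eq_map_mul_right_nhds_one
end

section
/- Let (R, +, 0, ×, 1, ≤) be a partially ordered unital nonassociative ring with 1 ≥ 0 that is monotone σ-complete. Suppose every x in (0,1] has a right-sup-almost-inverse, and inf_n {x^{→n}} = 0 for every x ∈ [0,1). Then for every x ∈ [0,1), the supremum S(x) := sup_n { Σ_{k=0}^n x^{→k} } exists. -/
/-!
For `0 ≤ x < 1` take a right-sup-almost-inverse `y` of `1 - x`; then `1 + x * y ≤ y`.
Iterating the monotone additive map `a ↦ x * a` on this inequality gives
`∑_{k<n} x^{→k} + x * (x * ⋯ (x * y)) ≤ y`, so the partial sums are bounded by `y`.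
They increase because the powers are nonnegative, and monotone σ-completeness yields the supremum.
-/

/-- Right powers in a nonassociative ring: `x^{→0} = 1`, `x^{→(n+1)} = x * x^{→n}`. -/
def rpow {R : Type*} [NonAssocRing R] (x : R) : ℕ → R
  | 0 => 1
  | n + 1 => x * rpow x n

section OrderedAddCommGroup

variable {R : Type*} [AddCommGroup R] [PartialOrder R] [IsOrderedAddMonoid R]

theorem sum_range_iterate_add_iterate_le {L : R →+ R} (hL : Monotone L) {a y : R}
    (h : a + L y ≤ y) (n : ℕ) : ∑ k ∈ Finset.range n, L^[k] a + L^[n] y ≤ y := by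
  induction n with
  | zero => simp
  | succ n ih =>
    calc ∑ k ∈ Finset.range (n + 1), L^[k] a + L^[n + 1] y
        = a + L (∑ k ∈ Finset.range n, L^[k] a + L^[n] y) := by
          simp only [Finset.sum_range_succ', Function.iterate_succ_apply', map_add, map_sum,
            Function.iterate_zero_apply]
          abel
      _ ≤ a + L y := add_le_add_right (hL ih) a
      _ ≤ y := h

theorem sum_range_iterate_le {L : R →+ R} (hL : Monotone L) {a y : R} (hy : 0 ≤ y)
    (h : a + L y ≤ y) (n : ℕ) : ∑ k ∈ Finset.range n, L^[k] a ≤ y := by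
  have hLy : 0 ≤ L^[n] y := by
    simpa [Function.iterate_fixed (map_zero L)] using hL.iterate n hy
  exact (le_add_of_nonneg_right hLy).trans (sum_range_iterate_add_iterate_le hL h n)

end OrderedAddCommGroup

theorem posMulMono_of_mul_nonneg {R : Type*} [NonUnitalNonAssocRing R] [PartialOrder R]
    [IsOrderedAddMonoid R] (mul_nonneg : ∀ a b : R, 0 ≤ a → 0 ≤ b → 0 ≤ a * b) :
    PosMulMono R where
  mul_le_mul_of_nonneg_left a ha b c hbc := by
    simpa only [mul_sub, sub_nonneg] using mul_nonneg _ _ ha (sub_nonneg.2 hbc)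

theorem rpow_eq_iterate_mulLeft {R : Type*} [NonAssocRing R] (x : R) (n : ℕ) :
    rpow x n = (AddMonoidHom.mulLeft x)^[n] 1 := by
  induction n with
  | zero => rfl
  | succ n ih => rw [Function.iterate_succ_apply', ← ih]; rfl

section OrderedNonAssocRing

variable {R : Type*} [NonAssocRing R] [PartialOrder R] [PosMulMono R]

theorem rpow_nonneg [ZeroLEOneClass R] {x : R} (hx : 0 ≤ x) (n : ℕ) : 0 ≤ rpow x n := by
  induction n with
  | zero => exact zero_le_one
  | succ n ih => exact mul_nonneg hx ih

theorem monotone_sum_range_rpow [IsOrderedAddMonoid R] [ZeroLEOneClass R] {x : R} (hx : 0 ≤ x) :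
    Monotone fun n => ∑ k ∈ Finset.range n, rpow x k :=
  monotone_nat_of_le_succ fun n => by
    simpa only [Finset.sum_range_succ] using le_add_of_nonneg_right (rpow_nonneg hx n)

theorem sum_range_rpow_le_of_one_le_sub_mul [IsOrderedAddMonoid R] {x y : R} (hx : 0 ≤ x)
    (hy : 0 ≤ y) (hxy : 1 ≤ (1 - x) * y) (n : ℕ) :
    ∑ k ∈ Finset.range n, rpow x k ≤ y := by
  have hfix : 1 + AddMonoidHom.mulLeft x y ≤ y := by
    rwa [sub_mul, one_mul, le_sub_iff_add_le] at hxy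
  simpa only [rpow_eq_iterate_mulLeft] using
    sum_range_iterate_le (fun _ _ h => mul_le_mul_of_nonneg_left h hx) hy hfix n

end OrderedNonAssocRing

theorem stmt_10_general {R : Type*} [NonAssocRing R] [PartialOrder R]
    (horder_add : ∀ a y z : R, y ≤ z → a + y ≤ a + z)
    (horder_mul : ∀ y z : R, 0 ≤ y → 0 ≤ z → 0 ≤ y * z)
    (h01 : (0 : R) ≤ 1)
    (hσ : ∀ u : ℕ → R, Monotone u → (∃ b : R, ∀ n, u n ≤ b) →
      ∃ s : R, IsLUB (Set.range u) s)
    (hrai : ∀ x : R, 0 < x → x ≤ 1 → ∃ y : R, 0 < y ∧ 1 ≤ x * y) :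
    ∀ x : R, 0 ≤ x → x < 1 →
      ∃ s : R, IsLUB (Set.range (fun n => ∑ k ∈ Finset.range (n + 1), rpow x k)) s := by
  have : IsOrderedAddMonoid R :=
    { add_le_add_left := fun a b h c => by simpa only [add_comm _ c] using horder_add c a b h }
  have : PosMulMono R := posMulMono_of_mul_nonneg horder_mul
  have : ZeroLEOneClass R := ⟨h01⟩
  intro x hx0 hx1
  obtain ⟨y, hy0, hy⟩ := hrai (1 - x) (sub_pos.2 hx1) (sub_le_self 1 hx0)
  exact hσ _ ((monotone_sum_range_rpow hx0).comp fun _ _ => Nat.succ_le_succ)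
    ⟨y, fun n => sum_range_rpow_le_of_one_le_sub_mul hx0 hy0.le hy (n + 1)⟩

/-- In a partially ordered unital nonassociative ring with `1 ≥ 0`, monotone
σ-complete, in which every `x ∈ (0,1]` has a right-sup-almost-inverse and
`inf_n x^{→n} = 0` for every `x ∈ [0,1)`, the supremum of the partial sums
`Σ_{k=0}^n x^{→k}` exists for every `x ∈ [0,1)`. -/
theorem stmt_10 {R : Type*} [NonAssocRing R] [PartialOrder R]
    (horder_add : ∀ a y z : R, y ≤ z → a + y ≤ a + z)
    (horder_mul : ∀ y z : R, 0 ≤ y → 0 ≤ z → 0 ≤ y * z)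
    (h01 : (0 : R) ≤ 1)
    (hσ : ∀ u : ℕ → R, Monotone u → (∃ b : R, ∀ n, u n ≤ b) →
      ∃ s : R, IsLUB (Set.range u) s)
    (hrai : ∀ x : R, 0 < x → x ≤ 1 → ∃ y : R, 0 < y ∧ 1 ≤ x * y)
    (hinf : ∀ x : R, 0 ≤ x → x < 1 → IsGLB (Set.range (rpow x)) 0) :
    ∀ x : R, 0 ≤ x → x < 1 →
      ∃ s : R, IsLUB (Set.range (fun n => ∑ k ∈ Finset.range (n + 1), rpow x k)) s :=
  stmt_10_general horder_add horder_mul h01 hσ hrai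
end

section
/- Under the hypotheses: (R, +, 0, ×, 1, ≤) a partially ordered unital nonassociative ring with 1 ≥ 0, monotone σ-complete, every x ∈ (0,1] having a right-sup-almost-inverse, and inf_n {x^{→n}} = 0 for all x ∈ [0,1); for every x ∈ [0,1), the element S(x) := sup_n Σ_{k=0}^n x^{→k} satisfies x·S(x) = S(x) − 1, equivalently (1 − x)·S(x) = 1. -/
/-- Under the hypotheses of the invertibility theorem, for every `x ∈ [0,1)` the
element `S(x) = sup_n Σ_{k=0}^n x^{→k}` satisfies `x * S(x) = S(x) - 1`,
equivalently `(1 - x) * S(x) = 1`. -/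
theorem stmt_11 {R : Type*} [NonAssocRing R] [PartialOrder R]
    (horder_add : ∀ a y z : R, y ≤ z → a + y ≤ a + z)
    (horder_mul : ∀ y z : R, 0 ≤ y → 0 ≤ z → 0 ≤ y * z)
    (h01 : (0 : R) ≤ 1)
    (hσ : ∀ u : ℕ → R, Monotone u → (∃ b : R, ∀ n, u n ≤ b) →
      ∃ s : R, IsLUB (Set.range u) s)
    (hrai : ∀ x : R, 0 < x → x ≤ 1 → ∃ y : R, 0 < y ∧ 1 ≤ x * y)
    (hinf : ∀ x : R, 0 ≤ x → x < 1 → IsGLB (Set.range (rpow x)) 0) :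
    ∀ x : R, 0 ≤ x → x < 1 →
      ∀ s : R, IsLUB (Set.range (fun n => ∑ k ∈ Finset.range (n + 1), rpow x k)) s →
        x * s = s - 1 ∧ (1 - x) * s = 1 := by
  intro x hx0 hx1 s hs
  set f : ℕ → R := fun n => ∑ k ∈ Finset.range (n + 1), rpow x k with hf
  have hle : ∀ y z : R, y ≤ z ↔ 0 ≤ z - y := by
    intro y z
    constructor
    · intro h
      have := horder_add (-y) y z h
      rwa [neg_add_cancel, neg_add_eq_sub] at this
    · intro h
      have := horder_add y 0 (z - y) h
      rwa [add_zero, add_sub_cancel] at this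
  have hmul_le : ∀ a y z : R, 0 ≤ a → y ≤ z → a * y ≤ a * z := by
    intro a y z ha h
    have h0 : 0 ≤ z - y := (hle y z).1 h
    have := horder_mul a (z - y) ha h0
    rw [mul_sub] at this
    exact (hle _ _).2 this
  have key : ∀ n, f (n + 1) = x * f n + 1 := by
    intro n
    simp only [hf]
    rw [Finset.mul_sum, Finset.sum_range_succ' (fun k => rpow x k) (n + 1)]
    simp [rpow]
  have hf0 : f 0 = 1 := by simp [hf, rpow]
  have hs1 : (1 : R) ≤ s := hf0 ▸ hs.1 ⟨0, rfl⟩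
  have hspos : (0 : R) ≤ s := le_trans h01 hs1
  have hxs0 : 0 ≤ x * s := horder_mul x s hx0 hspos
  -- upper bound direction : s ≤ x*s + 1
  have hub : ∀ n, f n ≤ x * s + 1 := by
    intro n
    cases n with
    | zero =>
      rw [hf0]
      have := horder_add 1 0 (x * s) hxs0
      rw [add_zero] at this
      rwa [add_comm] at this
    | succ m =>
      rw [key m]
      have h1 : x * f m ≤ x * s := hmul_le x (f m) s hx0 (hs.1 ⟨m, rfl⟩)
      have := horder_add 1 _ _ h1
      rwa [add_comm 1 (x * f m), add_comm 1 (x * s)] at this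
  have hsle : s ≤ x * s + 1 := hs.2 (by rintro _ ⟨n, rfl⟩; exact hub n)
  -- (1 - x) * s ≤ 1
  have h1x : 0 ≤ 1 - x := (hle x 1).1 hx1.le
  have hle1 : (1 - x) * s ≤ 1 := by
    rw [sub_mul, one_mul]
    have := (hle s (x * s + 1)).1 hsle
    apply (hle _ _).2
    have heq : x * s + 1 - s = 1 - (s - x * s) := by abel
    rwa [heq] at this
  -- 1 ≤ (1 - x) * s
  have hkey2 : ∀ n, (1 - x) * f n = 1 - rpow x (n + 1) := by
    intro n
    rw [sub_mul, one_mul]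
    have hx : x * f n = f (n + 1) - 1 := by rw [key n]; abel
    rw [hx]
    have : f (n + 1) - f n = rpow x (n + 1) := by
      simp only [hf]
      rw [Finset.sum_range_succ]
      abel
    rw [show f n - (f (n + 1) - 1) = 1 - (f (n + 1) - f n) by abel, this]
  have hlb : ∀ y ∈ Set.range (rpow x), 1 - (1 - x) * s ≤ y := by
    rintro _ ⟨n, rfl⟩
    cases n with
    | zero =>
      have : 0 ≤ (1 - x) * s := horder_mul _ _ h1x hspos
      show 1 - (1 - x) * s ≤ rpow x 0
      rw [show rpow x 0 = (1 : R) from rfl]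
      apply (hle _ _).2
      rwa [show (1 : R) - (1 - (1 - x) * s) = (1 - x) * s by abel]
    | succ m =>
      have h1 : (1 - x) * f m ≤ (1 - x) * s := hmul_le _ _ _ h1x (hs.1 ⟨m, rfl⟩)
      rw [hkey2 m] at h1
      have := (hle _ _).1 h1
      apply (hle _ _).2
      rwa [show (1 - x) * s - (1 - rpow x (m + 1)) =
        rpow x (m + 1) - (1 - (1 - x) * s) by abel] at this
  have hge1 : (1 : R) ≤ (1 - x) * s := by
    have h0 : 1 - (1 - x) * s ≤ 0 := (hinf x hx0 hx1).2 hlb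
    have := (hle _ _).1 h0
    apply (hle _ _).2
    rwa [show (0 : R) - (1 - (1 - x) * s) = (1 - x) * s - 1 by abel] at this
  have heq : (1 - x) * s = 1 := le_antisymm hle1 hge1
  refine ⟨?_, heq⟩
  have : s - x * s = 1 := by rw [← heq, sub_mul, one_mul]
  rw [show x * s = s - (s - x * s) by abel, this]
end

section
/- Let (R, +, 0, ×, 1, ≤) be a partially ordered unital nonassociative ring with 1 ≥ 0, monotone σ-complete, such that every x ∈ (0,1] has a right-sup-almost-inverse, and inf_n {x^{→n}} = 0 for all x ∈ [0,1). Then every x ∈ (0,1] admits a right inverse, namely x_R⁻¹ = sup_n Σ_{k=0}^n (1−x)^{→k}, and x_R⁻¹ ≥ 1. -/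
/-- In a partially ordered unital nonassociative ring with `1 ≥ 0`, monotone
σ-complete, in which every `x ∈ (0,1]` has a right-sup-almost-inverse and
`inf_n x^{→n} = 0` for every `x ∈ [0,1)`, every `x ∈ (0,1]` admits a right inverse,
namely `x_R⁻¹ = sup_n Σ_{k=0}^n (1-x)^{→k}`, and `x_R⁻¹ ≥ 1`. -/
theorem stmt_12 {R : Type*} [NonAssocRing R] [PartialOrder R]
    (horder_add : ∀ a y z : R, y ≤ z → a + y ≤ a + z)
    (horder_mul : ∀ y z : R, 0 ≤ y → 0 ≤ z → 0 ≤ y * z)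
    (h01 : (0 : R) ≤ 1)
    (hσ : ∀ u : ℕ → R, Monotone u → (∃ b : R, ∀ n, u n ≤ b) →
      ∃ s : R, IsLUB (Set.range u) s)
    (hrai : ∀ x : R, 0 < x → x ≤ 1 → ∃ y : R, 0 < y ∧ 1 ≤ x * y)
    (hinf : ∀ x : R, 0 ≤ x → x < 1 → IsGLB (Set.range (rpow x)) 0) :
    ∀ x : R, 0 < x → x ≤ 1 →
      ∃ s : R, IsLUB (Set.range (fun n => ∑ k ∈ Finset.range (n + 1), rpow (1 - x) k)) s ∧
        x * s = 1 ∧ 1 ≤ s := by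
  intro x hx0 hx1
  have hsub : ∀ y z : R, y ≤ z ↔ 0 ≤ z - y := by
    intro y z
    constructor
    · intro h
      have := horder_add (-y) y z h
      simpa [sub_eq_neg_add] using this
    · intro h
      have := horder_add y 0 (z - y) h
      simpa using this
  have hmul_mono : ∀ a y z : R, 0 ≤ a → y ≤ z → a * y ≤ a * z := by
    intro a y z ha h
    rw [hsub]
    have : 0 ≤ a * (z - y) := horder_mul a (z - y) ha ((hsub y z).mp h)
    simpa [mul_sub] using this
  set t : R := 1 - x with ht
  have hxt : x = 1 - t := by rw [ht]; abel
  have ht0 : 0 ≤ t := by simpa using (hsub x 1).mp hx1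
  have ht1 : t < 1 := by
    refine lt_of_le_of_ne ?_ ?_
    · rw [hsub]
      have : (1 : R) - t = x := by rw [ht]; abel
      rw [this]; exact hx0.le
    · intro h
      have h2 : (1 : R) - x = 1 := by rw [← ht, h]
      exact hx0.ne' (sub_eq_self.mp h2)
  have hp : ∀ n, 0 ≤ rpow t n := by
    intro n
    induction n with
    | zero => simpa [rpow] using h01
    | succ n ih => exact horder_mul t (rpow t n) ht0 ih
  set S : ℕ → R := fun n => ∑ k ∈ Finset.range (n + 1), rpow t k with hS
  have hS0 : S 0 = 1 := by simp [hS, rpow]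
  have hSsucc : ∀ n, S (n + 1) = S n + rpow t (n + 1) := by
    intro n
    simp [hS, Finset.sum_range_succ]
  have hSrec : ∀ n, S (n + 1) = 1 + t * S n := by
    intro n
    have h1 : t * S n = ∑ k ∈ Finset.range (n + 1), rpow t (k + 1) := by
      rw [hS, Finset.mul_sum]
      exact Finset.sum_congr rfl fun k _ => rfl
    have h2 : S (n + 1) = (∑ k ∈ Finset.range (n + 1), rpow t (k + 1)) + rpow t 0 := by
      rw [hS]
      exact Finset.sum_range_succ' (rpow t) (n + 1)
    rw [h2, ← h1]
    simp [rpow, add_comm]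
  have hadd_mono : ∀ a b c d : R, a ≤ b → c ≤ d → a + c ≤ b + d := by
    intro a b c d hab hcd
    calc a + c ≤ a + d := horder_add a c d hcd
      _ = d + a := add_comm _ _
      _ ≤ d + b := horder_add d a b hab
      _ = b + d := add_comm _ _
  have hS_mono : Monotone S := by
    apply monotone_nat_of_le_succ
    intro n
    rw [hSsucc, hsub]
    simpa using hp (n + 1)
  have hxS : ∀ n, x * S n = 1 - rpow t (n + 1) := by
    intro n
    have h1 : x * S n = S n - t * S n := by
      rw [hxt, sub_mul, one_mul]
    have h2 : t * S n = S (n + 1) - 1 := by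
      rw [hSrec n]; abel
    rw [h1, h2, hSsucc n]; abel
  obtain ⟨y, hy0, hxy⟩ := hrai x hx0 hx1
  have hxy_le_y : x * y ≤ y := by
    rw [hsub]
    have : y - x * y = t * y := by rw [hxt, sub_mul, one_mul]; abel
    rw [this]
    exact horder_mul t y ht0 hy0.le
  have hSy : ∀ n, S n ≤ y := by
    intro n
    induction n with
    | zero => rw [hS0]; exact hxy.trans hxy_le_y
    | succ n ih =>
      rw [hSrec n]
      calc 1 + t * S n ≤ x * y + t * y :=
            hadd_mono _ _ _ _ hxy (hmul_mono t (S n) y ht0 ih)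
        _ = y := by rw [hxt, sub_mul, one_mul]; abel
  obtain ⟨s, hlub⟩ := hσ S hS_mono ⟨y, hSy⟩
  have hs_ub : ∀ n, S n ≤ s := fun n => hlub.1 ⟨n, rfl⟩
  have h1s : (1 : R) ≤ s := hS0 ▸ hs_ub 0
  have hs0 : (0 : R) ≤ s := h01.trans h1s
  have hxs_le : x * s ≤ 1 := by
    have hub : ∀ n, S n ≤ 1 + t * s := by
      intro n
      cases n with
      | zero =>
        rw [hS0, hsub]
        simpa using horder_mul t s ht0 hs0
      | succ n =>
        rw [hSrec n]
        exact horder_add 1 _ _ (hmul_mono t (S n) s ht0 (hs_ub n))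
    have hsle : s ≤ 1 + t * s := hlub.2 (by rintro _ ⟨n, rfl⟩; exact hub n)
    have : 0 ≤ 1 + t * s - s := (hsub _ _).mp hsle
    rw [hsub]
    have heq : (1 : R) - x * s = 1 + t * s - s := by rw [hxt, sub_mul, one_mul]; abel
    rw [heq]; exact this
  have hxs_ge : 1 ≤ x * s := by
    have hglb := hinf t ht0 ht1
    have hlb : ∀ n, 1 - x * s ≤ rpow t n := by
      intro n
      cases n with
      | zero =>
        show (1 : R) - x * s ≤ 1
        rw [hsub]
        simpa using horder_mul x s hx0.le hs0
      | succ n =>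
        have h1 : x * S n ≤ x * s := hmul_mono x (S n) s hx0.le (hs_ub n)
        rw [hxS n] at h1
        rw [hsub] at h1 ⊢
        have : rpow t (n + 1) - (1 - x * s) = x * s - (1 - rpow t (n + 1)) := by abel
        rw [this]; exact h1
    have : 1 - x * s ≤ 0 := hglb.2 (by rintro _ ⟨n, rfl⟩; exact hlb n)
    rw [hsub] at this ⊢
    have heq : x * s - 1 = 0 - (1 - x * s) := by abel
    rw [heq]; exact this
  exact ⟨s, hlub, le_antisymm hxs_le hxs_ge, h1s⟩
end

section
/- Let (R, +, 0, ×, 1, ≤) be a partially ordered unital nonassociative ring with 1 ≥ 0, monotone σ-complete, in which every x ∈ (0,1] has both a right- and a left-sup-almost-inverse, inf_n {x^{→n}} = 0 and inf_n {x^{←n}} = 0 for all x ∈ [0,1), and in which any element having both a left and a right inverse has these equal. Then every x ∈ (0,1] is (two-sided) invertible, with inverse sup_n Σ_{k=0}^n (1−x)^{←k}. -/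
/-- Left powers: `x^{←0} = 1`, `x^{←(n+1)} = x^{←n} * x`. -/
def lpow {R : Type*} [NonAssocRing R] (x : R) : ℕ → R
  | 0 => 1
  | n + 1 => lpow x n * x

/-- In a partially ordered unital nonassociative ring with `1 ≥ 0`, monotone
σ-complete, in which every `x ∈ (0,1]` has both a right- and a left-sup-almost-inverse,
`inf_n x^{→n} = inf_n x^{←n} = 0` for all `x ∈ [0,1)`, and in which any element with
both a left and a right inverse has these equal, every `x ∈ (0,1]` is two-sided
invertible, with inverse `sup_n Σ_{k=0}^n (1-x)^{←k}`. -/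
theorem stmt_13 {R : Type*} [NonAssocRing R] [PartialOrder R]
    (horder_add : ∀ a y z : R, y ≤ z → a + y ≤ a + z)
    (horder_mul : ∀ y z : R, 0 ≤ y → 0 ≤ z → 0 ≤ y * z)
    (h01 : (0 : R) ≤ 1)
    (hσ : ∀ u : ℕ → R, Monotone u → (∃ b : R, ∀ n, u n ≤ b) →
      ∃ s : R, IsLUB (Set.range u) s)
    (hrai : ∀ x : R, 0 < x → x ≤ 1 → ∃ y : R, 0 < y ∧ 1 ≤ x * y)
    (hlai : ∀ x : R, 0 < x → x ≤ 1 → ∃ y : R, 0 < y ∧ 1 ≤ y * x)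
    (hinfr : ∀ x : R, 0 ≤ x → x < 1 → IsGLB (Set.range (rpow x)) 0)
    (hinfl : ∀ x : R, 0 ≤ x → x < 1 → IsGLB (Set.range (lpow x)) 0)
    (hlr : ∀ x y z : R, x * y = 1 → z * x = 1 → y = z) :
    ∀ x : R, 0 < x → x ≤ 1 →
      ∃ s : R, IsLUB (Set.range (fun n => ∑ k ∈ Finset.range (n + 1), lpow (1 - x) k)) s ∧
        x * s = 1 ∧ s * x = 1 := by
  -- basic order lemmas
  have hsub_nonneg : ∀ y z : R, y ≤ z → 0 ≤ z - y := by
    intro y z h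
    have := horder_add (-y) y z h
    simpa [sub_eq_neg_add] using this
  have hle_of_sub : ∀ y z : R, 0 ≤ z - y → y ≤ z := by
    intro y z h
    have := horder_add y 0 (z - y) h
    simpa using this
  have hmul_le_left : ∀ c y z : R, 0 ≤ c → y ≤ z → c * y ≤ c * z := by
    intro c y z hc h
    have h1 : 0 ≤ c * (z - y) := horder_mul c (z - y) hc (hsub_nonneg y z h)
    rw [mul_sub] at h1
    exact hle_of_sub _ _ h1
  have hmul_le_right : ∀ c y z : R, 0 ≤ c → y ≤ z → y * c ≤ z * c := by
    intro c y z hc h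
    have h1 : 0 ≤ (z - y) * c := horder_mul (z - y) c (hsub_nonneg y z h) hc
    rw [sub_mul] at h1
    exact hle_of_sub _ _ h1
  have hadd_right : ∀ w y z : R, y ≤ z → y + w ≤ z + w := by
    intro w y z h
    rw [add_comm y w, add_comm z w]; exact horder_add w y z h
  intro x hx hx1
  set a : R := 1 - x with ha_def
  have ha0 : 0 ≤ a := hsub_nonneg x 1 hx1
  have ha1 : a < 1 := by
    have hle : a ≤ 1 := by
      apply hle_of_sub
      have : 1 - a = x := by rw [ha_def]; abel
      rw [this]; exact hx.le
    rcases lt_or_eq_of_le hle with h | h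
    · exact h
    · exfalso
      have : x = 0 := by
        have := h
        rw [ha_def] at this
        have : x = 1 - 1 := by
          nth_rewrite 1 [show x = 1 - (1 - x) by abel]
          rw [this]
        simpa using this
      exact hx.ne' this
  -- nonnegativity of powers
  have hlp : ∀ n, 0 ≤ lpow a n := by
    intro n; induction n with
    | zero => simpa [lpow] using h01
    | succ n ih => exact horder_mul _ _ ih ha0
  have hrp : ∀ n, 0 ≤ rpow a n := by
    intro n; induction n with
    | zero => simpa [rpow] using h01
    | succ n ih => exact horder_mul _ _ ha0 ih
  ------------------------------------------------------------------
  -- LEFT side: S n = ∑_{k≤n} lpow a k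
  ------------------------------------------------------------------
  set S : ℕ → R := fun n => ∑ k ∈ Finset.range (n + 1), lpow a k with hS_def
  have hS0 : S 0 = 1 := by simp [hS_def, lpow]
  have hSrec : ∀ n, S (n + 1) = 1 + S n * a := by
    intro n
    rw [hS_def]
    simp only
    rw [Finset.sum_range_succ' (fun k => lpow a k) (n + 1)]
    simp only [lpow, Finset.sum_mul]
    rw [add_comm]
  have hSmono : Monotone S := by
    apply monotone_nat_of_le_succ
    intro n
    have : S n + 0 ≤ S n + lpow a (n + 1) := horder_add _ _ _ (hlp (n + 1))
    rw [add_zero] at this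
    calc S n ≤ S n + lpow a (n + 1) := this
    _ = S (n + 1) := by rw [hS_def]; exact (Finset.sum_range_succ _ _).symm
  -- bound via left almost-inverse
  obtain ⟨z, hz0, hzx⟩ := hlai x hx hx1
  have hza : z * a = z - z * x := by rw [ha_def, mul_sub, mul_one]
  have hSbound : ∀ n, S n ≤ z := by
    intro n; induction n with
    | zero =>
      rw [hS0]
      calc (1 : R) ≤ z * x := hzx
      _ ≤ z * 1 := hmul_le_left z x 1 hz0.le hx1
      _ = z := mul_one z
    | succ n ih =>
      rw [hSrec]
      calc 1 + S n * a ≤ 1 + z * a := horder_add _ _ _ (hmul_le_right a _ _ ha0 ih)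
      _ = 1 + (z - z * x) := by rw [hza]
      _ ≤ z * x + (z - z * x) := hadd_right _ _ _ hzx
      _ = z := by abel
  obtain ⟨s, hs⟩ := hσ S hSmono ⟨z, hSbound⟩
  have hsub : ∀ n, S n ≤ s := fun n => hs.1 ⟨n, rfl⟩
  have hs1 : (1 : R) ≤ s := hS0 ▸ hsub 0
  have hs0 : 0 ≤ s := le_trans h01 hs1
  -- s * x ≤ 1
  have hsa : s * a = s - s * x := by rw [ha_def, mul_sub, mul_one]
  have hub : ∀ r ∈ Set.range S, r ≤ 1 + s * a := by
    rintro r ⟨n, rfl⟩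
    cases n with
    | zero =>
      rw [hS0]
      have : 1 + 0 ≤ 1 + s * a := horder_add _ _ _ (horder_mul s a hs0 ha0)
      simpa using this
    | succ n =>
      rw [hSrec]
      exact horder_add _ _ _ (hmul_le_right a _ _ ha0 (hsub n))
  have hsle : s ≤ 1 + s * a := hs.2 hub
  have hsx_le : s * x ≤ 1 := by
    have h1 : s + (-(s * a)) ≤ (1 + s * a) + (-(s * a)) := hadd_right _ _ _ hsle
    have h2 : s - s * a ≤ 1 := by
      rw [show (1 + s * a) + (-(s * a)) = 1 by abel] at h1
      rw [show s + (-(s * a)) = s - s * a by abel] at h1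
      exact h1
    calc s * x = s - s * a := by rw [hsa]; abel
    _ ≤ 1 := h2
  -- S n * x = 1 - lpow a (n+1)
  have hSx : ∀ n, S n * x = 1 - lpow a (n + 1) := by
    intro n
    rw [hS_def]
    simp only [Finset.sum_mul]
    have hterm : ∀ k, lpow a k * x = lpow a k - lpow a (k + 1) := by
      intro k
      have : lpow a (k + 1) = lpow a k * a := rfl
      rw [this, ha_def, mul_sub, mul_one]
      abel
    calc ∑ k ∈ Finset.range (n + 1), lpow a k * x
        = ∑ k ∈ Finset.range (n + 1), (lpow a k - lpow a (k + 1)) := by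
          exact Finset.sum_congr rfl fun k _ => hterm k
    _ = lpow a 0 - lpow a (n + 1) := Finset.sum_range_sub' (fun k => lpow a k) (n + 1)
    _ = 1 - lpow a (n + 1) := by rw [show lpow a 0 = (1 : R) from rfl]
  -- 1 ≤ s * x
  have hsx_ge : 1 ≤ s * x := by
    have hlb : ∀ r ∈ Set.range (lpow a), 1 - s * x ≤ r := by
      rintro r ⟨n, rfl⟩
      cases n with
      | zero =>
        apply hle_of_sub
        rw [show lpow a 0 = (1 : R) from rfl]
        have : 0 ≤ s * x := horder_mul s x hs0 hx.le
        rw [show (1 : R) - (1 - s * x) = s * x by abel]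
        exact this
      | succ n =>
        have h1 : S n * x ≤ s * x := hmul_le_right x _ _ hx.le (hsub n)
        rw [hSx n] at h1
        apply hle_of_sub
        have := hsub_nonneg _ _ h1
        rw [show lpow a (n + 1) - (1 - s * x) = s * x - (1 - lpow a (n + 1)) by abel]
        exact this
    have h0 : 1 - s * x ≤ 0 := (hinfl a ha0 ha1).2 hlb
    apply hle_of_sub
    have := hsub_nonneg _ _ h0
    rw [show s * x - 1 = 0 - (1 - s * x) by abel]
    exact this
  have hsx : s * x = 1 := le_antisymm hsx_le hsx_ge
  ------------------------------------------------------------------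
  -- RIGHT side: T n = ∑_{k≤n} rpow a k
  ------------------------------------------------------------------
  set T : ℕ → R := fun n => ∑ k ∈ Finset.range (n + 1), rpow a k with hT_def
  have hT0 : T 0 = 1 := by simp [hT_def, rpow]
  have hTrec : ∀ n, T (n + 1) = 1 + a * T n := by
    intro n
    rw [hT_def]
    simp only
    rw [Finset.sum_range_succ' (fun k => rpow a k) (n + 1)]
    simp only [rpow, Finset.mul_sum]
    rw [add_comm]
  have hTmono : Monotone T := by
    apply monotone_nat_of_le_succ
    intro n
    have : T n + 0 ≤ T n + rpow a (n + 1) := horder_add _ _ _ (hrp (n + 1))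
    rw [add_zero] at this
    calc T n ≤ T n + rpow a (n + 1) := this
    _ = T (n + 1) := by rw [hT_def]; exact (Finset.sum_range_succ _ _).symm
  obtain ⟨y, hy0, hxy⟩ := hrai x hx hx1
  have hay : a * y = y - x * y := by rw [ha_def, sub_mul, one_mul]
  have hTbound : ∀ n, T n ≤ y := by
    intro n; induction n with
    | zero =>
      rw [hT0]
      calc (1 : R) ≤ x * y := hxy
      _ ≤ 1 * y := hmul_le_right y x 1 hy0.le hx1
      _ = y := one_mul y
    | succ n ih =>
      rw [hTrec]
      calc 1 + a * T n ≤ 1 + a * y := horder_add _ _ _ (hmul_le_left a _ _ ha0 ih)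
      _ = 1 + (y - x * y) := by rw [hay]
      _ ≤ x * y + (y - x * y) := hadd_right _ _ _ hxy
      _ = y := by abel
  obtain ⟨t, ht⟩ := hσ T hTmono ⟨y, hTbound⟩
  have htub : ∀ n, T n ≤ t := fun n => ht.1 ⟨n, rfl⟩
  have ht1 : (1 : R) ≤ t := hT0 ▸ htub 0
  have ht0 : 0 ≤ t := le_trans h01 ht1
  have hat : a * t = t - x * t := by rw [ha_def, sub_mul, one_mul]
  have htub2 : ∀ r ∈ Set.range T, r ≤ 1 + a * t := by
    rintro r ⟨n, rfl⟩
    cases n with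
    | zero =>
      rw [hT0]
      have : 1 + 0 ≤ 1 + a * t := horder_add _ _ _ (horder_mul a t ha0 ht0)
      simpa using this
    | succ n =>
      rw [hTrec]
      exact horder_add _ _ _ (hmul_le_left a _ _ ha0 (htub n))
  have htle : t ≤ 1 + a * t := ht.2 htub2
  have hxt_le : x * t ≤ 1 := by
    have h1 : t + (-(a * t)) ≤ (1 + a * t) + (-(a * t)) := hadd_right _ _ _ htle
    rw [show (1 + a * t) + (-(a * t)) = 1 by abel] at h1
    rw [show t + (-(a * t)) = t - a * t by abel] at h1
    calc x * t = t - a * t := by rw [hat]; abel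
    _ ≤ 1 := h1
  have hTx : ∀ n, x * T n = 1 - rpow a (n + 1) := by
    intro n
    rw [hT_def]
    simp only [Finset.mul_sum]
    have hterm : ∀ k, x * rpow a k = rpow a k - rpow a (k + 1) := by
      intro k
      have : rpow a (k + 1) = a * rpow a k := rfl
      rw [this, ha_def, sub_mul, one_mul]
      abel
    calc ∑ k ∈ Finset.range (n + 1), x * rpow a k
        = ∑ k ∈ Finset.range (n + 1), (rpow a k - rpow a (k + 1)) := by
          exact Finset.sum_congr rfl fun k _ => hterm k
    _ = rpow a 0 - rpow a (n + 1) := Finset.sum_range_sub' (fun k => rpow a k) (n + 1)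
    _ = 1 - rpow a (n + 1) := by rw [show rpow a 0 = (1 : R) from rfl]
  have hxt_ge : 1 ≤ x * t := by
    have hlb : ∀ r ∈ Set.range (rpow a), 1 - x * t ≤ r := by
      rintro r ⟨n, rfl⟩
      cases n with
      | zero =>
        apply hle_of_sub
        rw [show rpow a 0 = (1 : R) from rfl]
        have : 0 ≤ x * t := horder_mul x t hx.le ht0
        rw [show (1 : R) - (1 - x * t) = x * t by abel]
        exact this
      | succ n =>
        have h1 : x * T n ≤ x * t := hmul_le_left x _ _ hx.le (htub n)
        rw [hTx n] at h1
        apply hle_of_sub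
        have := hsub_nonneg _ _ h1
        rw [show rpow a (n + 1) - (1 - x * t) = x * t - (1 - rpow a (n + 1)) by abel]
        exact this
    have h0 : 1 - x * t ≤ 0 := (hinfr a ha0 ha1).2 hlb
    apply hle_of_sub
    have := hsub_nonneg _ _ h0
    rw [show x * t - 1 = 0 - (1 - x * t) by abel]
    exact this
  have hxt : x * t = 1 := le_antisymm hxt_le hxt_ge
  have hts : t = s := hlr x t s hxt hsx
  exact ⟨s, hs, hts ▸ hxt, hsx⟩
end

section
/- Let (R, +, 0, ×, 1, ≤) be a power-associative partially ordered unital ring with 1 ≥ 0, monotone σ-complete, such that every x ∈ (0,1] has a right- or a left-sup-almost-inverse, and inf_n {x^n} = 0 for all x ∈ [0,1). Then every x ∈ (0,1] is invertible with inverse sup_n Σ_{k=0}^n (1−x)^k. -/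
/-- In a power-associative partially ordered unital (nonassociative) ring with
`1 ≥ 0`, monotone σ-complete, in which every `x ∈ (0,1]` has a right- or a
left-sup-almost-inverse and `inf_n x^n = 0` for all `x ∈ [0,1)`, every `x ∈ (0,1]`
is invertible with inverse `sup_n Σ_{k=0}^n (1-x)^k`. -/
theorem stmt_14 {R : Type*} [NonAssocRing R] [PartialOrder R]
    -- power-associativity: powers of any single element are unambiguous
    (hpa : ∀ (x : R) (m n : ℕ), rpow x m * rpow x n = rpow x (m + n))
    (horder_add : ∀ a y z : R, y ≤ z → a + y ≤ a + z)
    (horder_mul : ∀ y z : R, 0 ≤ y → 0 ≤ z → 0 ≤ y * z)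
    (h01 : (0 : R) ≤ 1)
    (hσ : ∀ u : ℕ → R, Monotone u → (∃ b : R, ∀ n, u n ≤ b) →
      ∃ s : R, IsLUB (Set.range u) s)
    (hai : ∀ x : R, 0 < x → x ≤ 1 →
      ∃ y : R, 0 < y ∧ (1 ≤ x * y ∨ 1 ≤ y * x))
    (hinf : ∀ x : R, 0 ≤ x → x < 1 → IsGLB (Set.range (rpow x)) 0) :
    ∀ x : R, 0 < x → x ≤ 1 →
      ∃ s : R, IsLUB (Set.range (fun n => ∑ k ∈ Finset.range (n + 1), rpow (1 - x) k)) s ∧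
        x * s = 1 ∧ s * x = 1 := by
  intro x hx0 hx1
  -- order toolkit
  have hsub : ∀ a b : R, a ≤ b ↔ 0 ≤ b - a := by
    intro a b
    constructor
    · intro h
      have h2 := horder_add (-a) a b h
      have e1 : -a + a = (0 : R) := by abel
      have e2 : -a + b = b - a := by abel
      rw [e1, e2] at h2; exact h2
    · intro h
      have h2 := horder_add a 0 (b - a) h
      have e1 : a + (0 : R) = a := by abel
      have e2 : a + (b - a) = b := by abel
      rw [e1, e2] at h2; exact h2
  have hmull : ∀ (c a b : R), 0 ≤ c → a ≤ b → c * a ≤ c * b := by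
    intro c a b hc hab
    rw [hsub] at hab ⊢
    rw [← mul_sub]
    exact horder_mul _ _ hc hab
  have hmulr : ∀ (c a b : R), 0 ≤ c → a ≤ b → a * c ≤ b * c := by
    intro c a b hc hab
    rw [hsub] at hab ⊢
    rw [← sub_mul]
    exact horder_mul _ _ hab hc
  have haddl : ∀ (a b c : R), a ≤ b → c + a ≤ c + b := fun a b c h => horder_add c a b h
  set t : R := 1 - x with htdef
  have hx' : x = 1 - t := by rw [htdef]; abel
  have ht0 : 0 ≤ t := by
    have := (hsub x 1).mp hx1
    simpa [htdef] using this
  have ht1 : t ≤ 1 := by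
    refine (hsub t 1).mpr ?_
    have e : (1 : R) - t = x := by rw [htdef]; abel
    rw [e]; exact le_of_lt hx0
  have htlt : t < 1 := by
    refine lt_of_le_of_ne ht1 ?_
    intro h
    have : x = 0 := by rw [hx', h, sub_self]
    exact hx0.ne' this
  -- rpow facts
  have hrnn : ∀ n, 0 ≤ rpow t n := by
    intro n
    induction n with
    | zero => exact h01
    | succ n ih => exact horder_mul _ _ ht0 ih
  have hr1 : rpow t 1 = t := by simp [rpow]
  have hrsucc : ∀ n, rpow t n * t = rpow t (n + 1) := by
    intro n
    have h := hpa t n 1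
    rwa [hr1] at h
  set s : ℕ → R := fun n => ∑ k ∈ Finset.range (n + 1), rpow t k with hsdef
  have hs0 : s 0 = 1 := by simp [hsdef, rpow]
  have hssucc : ∀ n, s (n + 1) = s n + rpow t (n + 1) := by
    intro n
    simp [hsdef, Finset.sum_range_succ]
  have hshift : ∀ n, (∑ k ∈ Finset.range (n + 1), rpow t (k + 1)) = s (n + 1) - 1 := by
    intro n
    have h := Finset.sum_range_succ' (rpow t) (n + 1)
    have h0 : rpow t 0 = (1 : R) := rfl
    rw [h0] at h
    have hs' : s (n + 1) = ∑ i ∈ Finset.range (n + 1 + 1), rpow t i := rfl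
    rw [eq_sub_iff_add_eq, hs']
    exact h.symm
  have hts : ∀ n, t * s n = s (n + 1) - 1 := by
    intro n
    rw [← hshift n]
    have : t * s n = ∑ k ∈ Finset.range (n + 1), t * rpow t k := by
      rw [hsdef]; exact Finset.mul_sum _ _ _
    rw [this]
    exact Finset.sum_congr rfl (fun k _ => rfl)
  have hst : ∀ n, s n * t = s (n + 1) - 1 := by
    intro n
    rw [← hshift n]
    have : s n * t = ∑ k ∈ Finset.range (n + 1), rpow t k * t := by
      rw [hsdef]; exact Finset.sum_mul _ _ _
    rw [this]
    exact Finset.sum_congr rfl (fun k _ => hrsucc k)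
  have hxs : ∀ n, x * s n = 1 - rpow t (n + 1) := by
    intro n
    rw [hx', sub_mul, one_mul, hts n, hssucc n]
    abel
  have hsx : ∀ n, s n * x = 1 - rpow t (n + 1) := by
    intro n
    rw [hx', mul_sub, mul_one, hst n, hssucc n]
    abel
  have hsmono : Monotone s := by
    apply monotone_nat_of_le_succ
    intro n
    rw [hssucc n, hsub]
    have e : s n + rpow t (n + 1) - s n = rpow t (n + 1) := by abel
    rw [e]
    exact hrnn (n + 1)
  have hs1 : ∀ n, 1 ≤ s n := by
    intro n
    calc (1 : R) = s 0 := hs0.symm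
      _ ≤ s n := hsmono (Nat.zero_le n)
  -- boundedness via the almost-inverse
  obtain ⟨y, hy0, hy⟩ := hai x hx0 hx1
  have hbound : ∀ n, s n ≤ y := by
    cases hy with
    | inl hxy =>
      let Y : ℕ → R := fun n => Nat.rec y (fun _ Yn => 1 + t * Yn) n
      have hY0 : Y 0 = y := rfl
      have hYsucc : ∀ n, Y (n + 1) = 1 + t * Y n := fun n => rfl
      have hstep : ∀ n, Y (n + 1) ≤ Y n := by
        intro n
        induction n with
        | zero =>
          rw [hsub]
          have e : Y 0 - Y (0 + 1) = x * y - 1 := by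
            show y - (1 + t * y) = x * y - 1
            have hty : t * y = y - x * y := by rw [htdef, sub_mul, one_mul]
            rw [hty]
            abel
          rw [e]
          exact (hsub 1 (x * y)).mp hxy
        | succ n ih =>
          rw [hsub] at ih ⊢
          have e : Y (n + 1) - Y (n + 1 + 1) = t * (Y n - Y (n + 1)) := by
            rw [hYsucc n, hYsucc (n + 1), mul_sub]
            abel
          rw [e]
          exact horder_mul _ _ ht0 ih
      have hYy : ∀ n, Y n ≤ y := by
        intro n
        induction n with
        | zero => exact le_of_eq hY0
        | succ n ih => exact le_trans (hstep n) ih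
      have hsY : ∀ n, s n ≤ Y (n + 1) := by
        intro n
        induction n with
        | zero =>
          rw [hs0, hYsucc 0, hY0]
          have h1 : (0 : R) ≤ t * y := horder_mul _ _ ht0 (le_of_lt hy0)
          have h2 := haddl 0 (t * y) 1 h1
          simpa using h2
        | succ n ih =>
          have h1 : 1 + t * s n ≤ 1 + t * Y (n + 1) := haddl _ _ 1 (hmull t _ _ ht0 ih)
          have h2 : 1 + t * s n = s (n + 1) := by rw [hts n]; abel
          rw [hYsucc (n + 1), ← h2]
          exact h1
      intro n
      exact le_trans (hsY n) (hYy (n + 1))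
    | inr hyx =>
      let Y : ℕ → R := fun n => Nat.rec y (fun _ Yn => 1 + Yn * t) n
      have hY0 : Y 0 = y := rfl
      have hYsucc : ∀ n, Y (n + 1) = 1 + Y n * t := fun n => rfl
      have hstep : ∀ n, Y (n + 1) ≤ Y n := by
        intro n
        induction n with
        | zero =>
          rw [hsub]
          have e : Y 0 - Y (0 + 1) = y * x - 1 := by
            show y - (1 + y * t) = y * x - 1
            have hty : y * t = y - y * x := by rw [htdef, mul_sub, mul_one]
            rw [hty]
            abel
          rw [e]
          exact (hsub 1 (y * x)).mp hyx
        | succ n ih =>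
          rw [hsub] at ih ⊢
          have e : Y (n + 1) - Y (n + 1 + 1) = (Y n - Y (n + 1)) * t := by
            rw [hYsucc n, hYsucc (n + 1), sub_mul]
            abel
          rw [e]
          exact horder_mul _ _ ih ht0
      have hYy : ∀ n, Y n ≤ y := by
        intro n
        induction n with
        | zero => exact le_of_eq hY0
        | succ n ih => exact le_trans (hstep n) ih
      have hsY : ∀ n, s n ≤ Y (n + 1) := by
        intro n
        induction n with
        | zero =>
          rw [hs0, hYsucc 0, hY0]
          have h1 : (0 : R) ≤ y * t := horder_mul _ _ (le_of_lt hy0) ht0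
          have h2 := haddl 0 (y * t) 1 h1
          simpa using h2
        | succ n ih =>
          have h1 : 1 + s n * t ≤ 1 + Y (n + 1) * t := haddl _ _ 1 (hmulr t _ _ ht0 ih)
          have h2 : 1 + s n * t = s (n + 1) := by rw [hst n]; abel
          rw [hYsucc (n + 1), ← h2]
          exact h1
      intro n
      exact le_trans (hsY n) (hYy (n + 1))
  obtain ⟨S, hS⟩ := hσ s hsmono ⟨y, hbound⟩
  have hSub : ∀ n, s n ≤ S := fun n => hS.1 (Set.mem_range_self n)
  have hS1 : (1 : R) ≤ S := le_trans (hs1 0) (hSub 0)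
  have hS0 : (0 : R) ≤ S := le_trans h01 hS1
  have hglb := hinf t ht0 htlt
  have key_ge : ∀ z : R, (∀ n, 1 - rpow t (n + 1) ≤ z) → 1 ≤ z := by
    intro z hz
    have hlb : (1 - z) ∈ lowerBounds (Set.range (rpow t)) := by
      rintro _ ⟨m, rfl⟩
      cases m with
      | zero =>
        have h1 : 1 - z ≤ rpow t 1 := by
          have h := hz 0
          rw [hsub] at h ⊢
          have e : rpow t 1 - (1 - z) = z - (1 - rpow t 1) := by abel
          rw [e]
          exact h
        have h0 : rpow t 0 = (1 : R) := rfl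
        rw [h0]
        calc 1 - z ≤ rpow t 1 := h1
          _ ≤ 1 := by rw [hr1]; exact ht1
      | succ m =>
        have h := hz m
        rw [hsub] at h ⊢
        have e : rpow t (m + 1) - (1 - z) = z - (1 - rpow t (m + 1)) := by abel
        rw [e]
        exact h
    have h2 : 1 - z ≤ 0 := hglb.2 hlb
    have h3 := (hsub (1 - z) 0).mp h2
    have e : (0 : R) - (1 - z) = z - 1 := by abel
    rw [e] at h3
    exact (hsub 1 z).mpr h3
  have hxS_ge : 1 ≤ x * S := by
    apply key_ge
    intro n
    rw [← hxs n]
    exact hmull x _ _ (le_of_lt hx0) (hSub n)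
  have hSx_ge : 1 ≤ S * x := by
    apply key_ge
    intro n
    rw [← hsx n]
    exact hmulr x _ _ (le_of_lt hx0) (hSub n)
  have hxS_le : x * S ≤ 1 := by
    have hub : (1 + t * S) ∈ upperBounds (Set.range s) := by
      rintro _ ⟨n, rfl⟩
      cases n with
      | zero =>
        rw [hs0]
        have h1 : (0 : R) ≤ t * S := horder_mul _ _ ht0 hS0
        have h2 := haddl 0 (t * S) 1 h1
        simpa using h2
      | succ n =>
        have h1 : 1 + t * s n ≤ 1 + t * S := haddl _ _ 1 (hmull t _ _ ht0 (hSub n))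
        have h2 : 1 + t * s n = s (n + 1) := by rw [hts n]; abel
        rw [← h2]
        exact h1
    have hSle : S ≤ 1 + t * S := hS.2 hub
    rw [hx', sub_mul, one_mul]
    rw [hsub] at hSle ⊢
    have e : 1 - (S - t * S) = 1 + t * S - S := by abel
    rw [e]
    exact hSle
  have hSx_le : S * x ≤ 1 := by
    have hub : (1 + S * t) ∈ upperBounds (Set.range s) := by
      rintro _ ⟨n, rfl⟩
      cases n with
      | zero =>
        rw [hs0]
        have h1 : (0 : R) ≤ S * t := horder_mul _ _ hS0 ht0
        have h2 := haddl 0 (S * t) 1 h1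
        simpa using h2
      | succ n =>
        have h1 : 1 + s n * t ≤ 1 + S * t := haddl _ _ 1 (hmulr t _ _ ht0 (hSub n))
        have h2 : 1 + s n * t = s (n + 1) := by rw [hst n]; abel
        rw [← h2]
        exact h1
    have hSle : S ≤ 1 + S * t := hS.2 hub
    rw [hx', mul_sub, mul_one]
    rw [hsub] at hSle ⊢
    have e : 1 - (S - S * t) = 1 + S * t - S := by abel
    rw [e]
    exact hSle
  exact ⟨S, hS, le_antisymm hxS_le hxS_ge, le_antisymm hSx_le hSx_ge⟩
end

section
/- Let (R, +, 0, ×, 1, ≤) be a monotone σ-complete partially ordered associative unital ring. If x ∈ (0,1) is invertible with x⁻¹ > 0 and 1 − x is not a zero divisor, then inf_n {x^n} exists and equals 0. -/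
/-- In a monotone σ-complete partially ordered associative unital ring, if
`x ∈ (0,1)` is invertible with `x⁻¹ > 0` and `1 - x` is not a zero divisor, then
`inf_n x^n` exists and equals `0`. -/
theorem stmt_16 {R : Type*} [Ring R] [PartialOrder R]
    (horder_add : ∀ a y z : R, y ≤ z → a + y ≤ a + z)
    (horder_mul : ∀ y z : R, 0 ≤ y → 0 ≤ z → 0 ≤ y * z)
    (hσ : ∀ u : ℕ → R, Monotone u → (∃ b : R, ∀ n, u n ≤ b) →
      ∃ s : R, IsLUB (Set.range u) s)
    (x : R) (hx0 : 0 < x) (hx1 : x < 1)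
    (y : R) (hxy : x * y = 1) (hyx : y * x = 1) (hy : 0 < y)
    (hnzd : ∀ a : R, (1 - x) * a = 0 → a = 0) :
    IsGLB (Set.range (fun n : ℕ => x ^ n)) 0 := by
  -- basic order lemmas
  have sub_nonneg' : ∀ a b : R, a ≤ b → 0 ≤ b - a := by
    intro a b h
    have := horder_add (-a) a b h
    simpa [sub_eq_add_neg, add_comm] using this
  have le_of_sub_nonneg' : ∀ a b : R, 0 ≤ b - a → a ≤ b := by
    intro a b h
    have := horder_add a 0 (b - a) h
    simpa using this
  have neg_le_neg' : ∀ a b : R, a ≤ b → -b ≤ -a := by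
    intro a b h
    apply le_of_sub_nonneg'
    have : (-a : R) - -b = b - a := by abel
    rw [this]
    exact sub_nonneg' a b h
  have mul_le_mul_left' : ∀ c a b : R, 0 ≤ c → a ≤ b → c * a ≤ c * b := by
    intro c a b hc h
    apply le_of_sub_nonneg'
    have := horder_mul c (b - a) hc (sub_nonneg' a b h)
    rwa [mul_sub] at this
  -- powers are nonneg
  have pow_nonneg' : ∀ n : ℕ, (0 : R) ≤ x ^ n := by
    intro n
    induction n with
    | zero => simpa using hx0.le.trans hx1.le
    | succ n ih =>
      rw [pow_succ]
      exact horder_mul _ _ ih hx0.le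
  -- powers are decreasing
  have pow_succ_le : ∀ n : ℕ, x ^ (n + 1) ≤ x ^ n := by
    intro n
    have := mul_le_mul_left' (x ^ n) x 1 (pow_nonneg' n) hx1.le
    simpa [pow_succ] using this
  -- build the sup of -x^n
  set u : ℕ → R := fun n => -(x ^ n) with hu
  have humono : Monotone u := by
    apply monotone_nat_of_le_succ
    intro n
    exact neg_le_neg' _ _ (pow_succ_le n)
  obtain ⟨s, hs⟩ := hσ u humono ⟨0, fun n => by
    simpa [hu] using neg_le_neg' 0 (x ^ n) (pow_nonneg' n)⟩
  set l : R := -s with hl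
  have hlb : ∀ n : ℕ, l ≤ x ^ n := by
    intro n
    have h1 : u n ≤ s := hs.1 ⟨n, rfl⟩
    have := neg_le_neg' _ _ h1
    simpa [hu, hl] using this
  have hglb : IsGLB (Set.range (fun n : ℕ => x ^ n)) l := by
    constructor
    · rintro _ ⟨n, rfl⟩
      exact hlb n
    · intro b hb
      have hub : -b ∈ upperBounds (Set.range u) := by
        rintro _ ⟨n, rfl⟩
        exact neg_le_neg' _ _ (hb ⟨n, rfl⟩)
      have := hs.2 hub
      have := neg_le_neg' _ _ this
      simpa [hl] using this
  -- show l = 0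
  have hxl_lb : ∀ n : ℕ, x * l ≤ x ^ n := by
    intro n
    cases n with
    | zero =>
      have h1 : x * l ≤ x * 1 := mul_le_mul_left' x l 1 hx0.le ((hlb 1).trans (by simpa using pow_succ_le 0))
      calc x * l ≤ x * 1 := h1
        _ = x := mul_one x
        _ ≤ 1 := hx1.le
        _ = x ^ 0 := (pow_zero x).symm
    | succ n =>
      have := mul_le_mul_left' x l (x ^ n) hx0.le (hlb n)
      rwa [← pow_succ'] at this
  have hxl_le : x * l ≤ l := hglb.2 (by rintro _ ⟨n, rfl⟩; exact hxl_lb n)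
  have hyl_lb : ∀ n : ℕ, y * l ≤ x ^ n := by
    intro n
    have := mul_le_mul_left' y l (x ^ (n + 1)) hy.le (hlb (n + 1))
    have h2 : y * x ^ (n + 1) = x ^ n := by
      rw [pow_succ', ← mul_assoc, hyx, one_mul]
    rwa [h2] at this
  have hyl_le : y * l ≤ l := hglb.2 (by rintro _ ⟨n, rfl⟩; exact hyl_lb n)
  have hle_xl : l ≤ x * l := by
    have := mul_le_mul_left' x (y * l) l hx0.le hyl_le
    rwa [← mul_assoc, hxy, one_mul] at this
  have hxl : x * l = l := le_antisymm hxl_le hle_xl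
  have hl0 : l = 0 := by
    apply hnzd
    rw [sub_mul, one_mul, hxl, sub_self]
  rw [← hl0]
  exact hglb
end
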